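/- arXiv:2212.10615 — 5 statements merged into one kernel-verified Lean document; each statement's English description precedes it below -/
import Mathlib

section
/- A map v: L(C₁ ⊎ C₂) → A₁ ⊎ A₂ is (the extension of) a simple fibred valuation with respect to the fibring pair (λ,μ) if and only if v is a homomorphic valuation on the fibred matrix M_(λ,μ). -/
set_option autoImplicit false

namespace Fibring

/-- Propositional formulas over a signature `C` with arity function `ar`. -/
inductive Fm (C : Type) (ar : C → ℕ) : Type
  | var : ℕ → Fm C ar
  | app : (c : C) → (Fin (ar c) → Fm C ar) → Fm C ar

/-- Homomorphic extension of a valuation `v` to all formulas, relative to an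
interpretation `I` of the connectives. -/
def eval {C A : Type} {ar : C → ℕ}
    (I : (c : C) → (Fin (ar c) → A) → A) (v : ℕ → A) : Fm C ar → A
  | .var n => v n
  | .app c args => I c fun i => eval I v (args i)

/-- Matrix consequence relation. -/
def Mdl {C A : Type} {ar : C → ℕ}
    (I : (c : C) → (Fin (ar c) → A) → A) (D : Set A)
    (Γ : Set (Fm C ar)) (φ : Fm C ar) : Prop :=
  ∀ v : ℕ → A, (∀ ψ ∈ Γ, eval I v ψ ∈ D) → eval I v φ ∈ D

/-- Substitution. -/
def subst {C : Type} {ar : C → ℕ} (σ : ℕ → Fm C ar) : Fm C ar → Fm C ar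
  | .var n => σ n
  | .app c args => .app c fun i => subst σ (args i)

variable {C₁ C₂ A₁ A₂ : Type} {ar₁ : C₁ → ℕ} {ar₂ : C₂ → ℕ}

/-- The coercion `∗_μ : A₁ ⊎ A₂ → A₁`. -/
def starMu (mu : A₂ → A₁) : A₁ ⊕ A₂ → A₁ := Sum.elim id mu

/-- The coercion `∗_λ : A₁ ⊎ A₂ → A₂`. -/
def starLa (lam : A₁ → A₂) : A₁ ⊕ A₂ → A₂ := Sum.elim lam id

/-- Interpretation of the fibred matrix `M_(λ,μ)`. -/
def fibInterp (I₁ : (c : C₁) → (Fin (ar₁ c) → A₁) → A₁)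
    (I₂ : (c : C₂) → (Fin (ar₂ c) → A₂) → A₂)
    (lam : A₁ → A₂) (mu : A₂ → A₁) :
    (c : C₁ ⊕ C₂) → (Fin (Sum.elim ar₁ ar₂ c) → A₁ ⊕ A₂) → A₁ ⊕ A₂
  | .inl c, args => Sum.inl (I₁ c fun i => starMu mu (args i))
  | .inr c, args => Sum.inr (I₂ c fun i => starLa lam (args i))

/-- Designated values of the fibred matrix: `D₁ ⊎ D₂`. -/
def Dfib (D₁ : Set A₁) (D₂ : Set A₂) : Set (A₁ ⊕ A₂) :=
  Sum.inl '' D₁ ∪ Sum.inr '' D₂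

/-- Admissible fibring pairs: `λ` and `μ` preserve and reflect designatedness. -/
def Admissible (D₁ : Set A₁) (D₂ : Set A₂) (lam : A₁ → A₂) (mu : A₂ → A₁) : Prop :=
  (∀ x, lam x ∈ D₂ ↔ x ∈ D₁) ∧ (∀ y, mu y ∈ D₁ ↔ y ∈ D₂)

/-- Recursive extension of a simple fibred valuation to the fibred language. -/
def sfvExt (I₁ : (c : C₁) → (Fin (ar₁ c) → A₁) → A₁)
    (I₂ : (c : C₂) → (Fin (ar₂ c) → A₂) → A₂)
    (lam : A₁ → A₂) (mu : A₂ → A₁) (v : ℕ → A₁ ⊕ A₂) :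
    Fm (C₁ ⊕ C₂) (Sum.elim ar₁ ar₂) → A₁ ⊕ A₂
  | .var n => v n
  | .app (.inl c) args =>
      Sum.inl (I₁ c fun i => starMu mu (sfvExt I₁ I₂ lam mu v (args i)))
  | .app (.inr c) args =>
      Sum.inr (I₂ c fun i => starLa lam (sfvExt I₁ I₂ lam mu v (args i)))

/-- Inclusion of `L(C₁)` into the fibred language `L(C₁ ⊎ C₂)`. -/
def inj₁ (ar₂ : C₂ → ℕ) : Fm C₁ ar₁ → Fm (C₁ ⊕ C₂) (Sum.elim ar₁ ar₂)
  | .var n => .var n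
  | .app c args => .app (Sum.inl c) fun i => inj₁ ar₂ (args i)

/-- `Repl c₁ c₂ h φ ψ`: `ψ` results from `φ` by replacing exactly one occurrence
of `c₁` by `c₂`. -/
inductive Repl {C : Type} {ar : C → ℕ} (c₁ c₂ : C) (h : ar c₁ = ar c₂) :
    Fm C ar → Fm C ar → Prop
  | top (args : Fin (ar c₁) → Fm C ar) :
      Repl c₁ c₂ h (.app c₁ args) (.app c₂ fun i => args (Fin.cast h.symm i))
  | congr (c : C) (args args' : Fin (ar c) → Fm C ar) (j : Fin (ar c))
      (hj : Repl c₁ c₂ h (args j) (args' j))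
      (hother : ∀ i, i ≠ j → args i = args' i) :
      Repl c₁ c₂ h (.app c args) (.app c args')

/-- `(c₁,c₂)`-associated formulas: a finite chain of single replacements of
`c₁` by `c₂` or vice versa (including equality). -/
def Assoc {C : Type} {ar : C → ℕ} (c₁ c₂ : C) (h : ar c₁ = ar c₂)
    (φ₁ φ₂ : Fm C ar) : Prop :=
  Relation.EqvGen (Repl c₁ c₂ h) φ₁ φ₂

theorem exists_eq_eval_iff {C A : Type} {ar : C → ℕ}
    (I : (c : C) → (Fin (ar c) → A) → A) (v : Fm C ar → A) :
    (∃ u : ℕ → A, v = eval I u) ↔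
      ∀ (c : C) (args : Fin (ar c) → Fm C ar), v (.app c args) = I c fun i => v (args i) := by
  constructor
  · rintro ⟨u, rfl⟩ c args
    rfl
  · intro hv
    refine ⟨fun n => v (.var n), funext fun φ => ?_⟩
    induction φ with
    | var n => rfl
    | app c args ih => simp only [hv, eval, ih]

section

variable (I₁ : (c : C₁) → (Fin (ar₁ c) → A₁) → A₁) (I₂ : (c : C₂) → (Fin (ar₂ c) → A₂) → A₂)
  (lam : A₁ → A₂) (mu : A₂ → A₁)

theorem sfvExt_app (u : ℕ → A₁ ⊕ A₂) (c : C₁ ⊕ C₂)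
    (args : Fin (Sum.elim ar₁ ar₂ c) → Fm (C₁ ⊕ C₂) (Sum.elim ar₁ ar₂)) :
    sfvExt I₁ I₂ lam mu u (.app c args) =
      fibInterp I₁ I₂ lam mu c fun i => sfvExt I₁ I₂ lam mu u (args i) := by
  cases c <;> rfl

theorem sfvExt_eq_eval : sfvExt I₁ I₂ lam mu = eval (fibInterp I₁ I₂ lam mu) := by
  funext u φ
  induction φ with
  | var n => rfl
  | app c args ih => simp only [sfvExt_app, eval, ih]

end

/-- a map on the fibred language is the extension of a simple
fibred valuation iff it is a homomorphic valuation on the fibred matrix. -/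
theorem sfv_iff_hom_valuation
    {C₁ C₂ A₁ A₂ : Type} {ar₁ : C₁ → ℕ} {ar₂ : C₂ → ℕ}
    (I₁ : (c : C₁) → (Fin (ar₁ c) → A₁) → A₁)
    (I₂ : (c : C₂) → (Fin (ar₂ c) → A₂) → A₂)
    (lam : A₁ → A₂) (mu : A₂ → A₁)
    (v : Fm (C₁ ⊕ C₂) (Sum.elim ar₁ ar₂) → A₁ ⊕ A₂) :
    (∃ u : ℕ → A₁ ⊕ A₂, v = sfvExt I₁ I₂ lam mu u) ↔
      (∀ (c : C₁ ⊕ C₂) (args : Fin (Sum.elim ar₁ ar₂ c) → Fm (C₁ ⊕ C₂) (Sum.elim ar₁ ar₂)),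
        v (.app c args) = fibInterp I₁ I₂ lam mu c fun i => v (args i)) := by
  rw [sfvExt_eq_eval]
  exact exists_eq_eval_iff _ v

end Fibring
end

section
/- If A₁ and A₂ are finite sets, then the consequence relation of the fibred matrix M_(λ,μ) is finitary: Γ ⊨ φ implies Γ₀ ⊨ φ for some finite Γ₀ ⊆ Γ. -/
set_option autoImplicit false

namespace Fibring

variable {C₁ C₂ A₁ A₂ : Type} {ar₁ : C₁ → ℕ} {ar₂ : C₂ → ℕ}

/-! Valuations `ℕ → A` into a finite matrix form a compact space (Tychonoff), and the value of a
formula depends on finitely many variables, so it is locally constant. A counter-valuation for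
`Γ ⊨ φ` is thus a point of the compact set `{v | v φ ∉ D}` outside the open sets
`{v | v ψ ∉ D}`, `ψ ∈ Γ`; entailment says these cover it, and a finite subcover is a finite
`Γ₀ ⊆ Γ` with `Γ₀ ⊨ φ`. -/

theorem eval_continuous {C A : Type} {ar : C → ℕ} [TopologicalSpace A] [DiscreteTopology A]
    (I : (c : C) → (Fin (ar c) → A) → A) (ψ : Fm C ar) :
    Continuous fun v : ℕ → A => eval I v ψ := by
  induction ψ with
  | var n => exact continuous_apply n
  | app c args ih => exact continuous_of_discreteTopology.comp (continuous_pi ih)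

theorem mdl_iff_subset_biUnion {C A : Type} {ar : C → ℕ}
    (I : (c : C) → (Fin (ar c) → A) → A) (D : Set A) (Γ : Set (Fm C ar)) (φ : Fm C ar) :
    Mdl I D Γ φ ↔ {v | eval I v φ ∉ D} ⊆ ⋃ ψ ∈ Γ, {v | eval I v ψ ∉ D} := by
  simp only [Mdl, Set.subset_def, Set.mem_ofPred_eq, Set.mem_iUnion, exists_prop]
  exact forall_congr' fun v => not_imp_not.symm.trans (by simp only [not_forall, exists_prop])

theorem Mdl.finitary {C A : Type} [Finite A] {ar : C → ℕ}
    {I : (c : C) → (Fin (ar c) → A) → A} {D : Set A} {Γ : Set (Fm C ar)} {φ : Fm C ar}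
    (h : Mdl I D Γ φ) : ∃ Γ₀ ⊆ Γ, Γ₀.Finite ∧ Mdl I D Γ₀ φ := by
  let _ : TopologicalSpace A := ⊥
  have _ : DiscreteTopology A := ⟨rfl⟩
  have hcompact : IsCompact {v : ℕ → A | eval I v φ ∉ D} :=
    ((isClosed_discrete Dᶜ).preimage (eval_continuous I φ)).isCompact
  have hopen (ψ : Fm C ar) : IsOpen {v : ℕ → A | eval I v ψ ∉ D} :=
    (isOpen_discrete Dᶜ).preimage (eval_continuous I ψ)
  obtain ⟨Γ₀, hΓ₀, hfin, hcover⟩ := hcompact.elim_finite_subcover_image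
    (fun ψ _ => hopen ψ) ((mdl_iff_subset_biUnion I D Γ φ).1 h)
  exact ⟨Γ₀, hΓ₀, hfin, (mdl_iff_subset_biUnion I D Γ₀ φ).2 hcover⟩

/-- if the supports are finite then the consequence relation of the
fibred matrix is finitary. -/
theorem fibring_finitary
    {C₁ C₂ A₁ A₂ : Type} [Finite A₁] [Finite A₂]
    {ar₁ : C₁ → ℕ} {ar₂ : C₂ → ℕ}
    (I₁ : (c : C₁) → (Fin (ar₁ c) → A₁) → A₁)
    (I₂ : (c : C₂) → (Fin (ar₂ c) → A₂) → A₂)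
    (D₁ : Set A₁) (D₂ : Set A₂)
    (lam : A₁ → A₂) (mu : A₂ → A₁)
    (Γ : Set (Fm (C₁ ⊕ C₂) (Sum.elim ar₁ ar₂)))
    (φ : Fm (C₁ ⊕ C₂) (Sum.elim ar₁ ar₂)) :
    Mdl (fibInterp I₁ I₂ lam mu) (Dfib D₁ D₂) Γ φ →
      ∃ Γ₀ ⊆ Γ, Γ₀.Finite ∧ Mdl (fibInterp I₁ I₂ lam mu) (Dfib D₁ D₂) Γ₀ φ :=
  Mdl.finitary

end Fibring
end

section
/- If L₁ = ⟨C₁, ⊨_{M₁}⟩ and L₂ = ⟨C₂, ⊨_{M₂}⟩ are non-trivial matrix logics, then for every fibring pair (λ,μ), the fibring [L₁ ⊛ L₂]_(λ,μ) is a weak conservative extension of L₁: for every φ ∈ L(C₁), ⊨_{M₁} φ if and only if ⊨_{M_(λ,μ)} φ. -/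
set_option autoImplicit false

namespace Fibring

variable {C₁ C₂ A₁ A₂ : Type} {ar₁ : C₁ → ℕ} {ar₂ : C₂ → ℕ}

/-! A compound formula of `L(C₁)` is evaluated in the fibred matrix into the `A₁` summand, where
designation is `D₁`, and its value there is its `M₁`-value under the valuation `∗_μ ∘ v`;
conversely every `M₁`-valuation `w` is realised by the fibred valuation `inl ∘ w`. The only
formulas that escape this are the variables, and a variable is never a tautology of a
non-trivial logic. -/

section

variable {C₁ C₂ A₁ A₂ : Type} {ar₁ : C₁ → ℕ} {ar₂ : C₂ → ℕ}
  (I₁ : (c : C₁) → (Fin (ar₁ c) → A₁) → A₁) (I₂ : (c : C₂) → (Fin (ar₂ c) → A₂) → A₂)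
  (lam : A₁ → A₂) (mu : A₂ → A₁)

lemma mdl_empty_iff {C A : Type} {ar : C → ℕ} (I : (c : C) → (Fin (ar c) → A) → A)
    (D : Set A) (φ : Fm C ar) : Mdl I D ∅ φ ↔ ∀ v, eval I v φ ∈ D := by
  simp [Mdl]

lemma not_mdl_empty_var {C A : Type} {ar : C → ℕ} {I : (c : C) → (Fin (ar c) → A) → A}
    {D : Set A} (hnontriv : ∃ (Γ : Set (Fm C ar)) (ψ : Fm C ar), ¬ Mdl I D Γ ψ) (n : ℕ) :
    ¬ Mdl I D ∅ (.var n) := by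
  obtain ⟨Γ, ψ, hns⟩ := hnontriv
  intro hvar
  exact hns fun w _ => (mdl_empty_iff I D _).1 hvar fun _ => eval I w ψ

@[simp]
lemma inl_mem_Dfib {D₁ : Set A₁} {D₂ : Set A₂} {a : A₁} :
    (Sum.inl a : A₁ ⊕ A₂) ∈ Dfib D₁ D₂ ↔ a ∈ D₁ := by
  simp [Dfib]

lemma starMu_eval_inj₁ (v : ℕ → A₁ ⊕ A₂) :
    ∀ ψ : Fm C₁ ar₁,
      starMu mu (eval (fibInterp I₁ I₂ lam mu) v (inj₁ ar₂ ψ)) = eval I₁ (starMu mu ∘ v) ψ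
  | .var _ => rfl
  | .app c args => by
      simp only [inj₁, eval, fibInterp, starMu, Sum.elim_inl]
      exact congrArg (I₁ c) (funext fun i => starMu_eval_inj₁ v (args i))

lemma eval_inj₁_app (v : ℕ → A₁ ⊕ A₂) (c : C₁) (args : Fin (ar₁ c) → Fm C₁ ar₁) :
    eval (fibInterp I₁ I₂ lam mu) v (inj₁ ar₂ (.app c args)) =
      Sum.inl (eval I₁ (starMu mu ∘ v) (.app c args)) := by
  simp only [inj₁, eval, fibInterp]
  exact congrArg (fun f => Sum.inl (I₁ c f))
    (funext fun i => starMu_eval_inj₁ I₁ I₂ lam mu v (args i))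

lemma eval_inj₁_inl (w : ℕ → A₁) :
    ∀ ψ : Fm C₁ ar₁,
      eval (fibInterp I₁ I₂ lam mu) (Sum.inl ∘ w) (inj₁ ar₂ ψ) = Sum.inl (eval I₁ w ψ)
  | .var _ => rfl
  | .app c args => by
      rw [eval_inj₁_app]
      rfl

end

theorem fibring_weak_conservative_general
    {C₁ C₂ A₁ A₂ : Type} {ar₁ : C₁ → ℕ} {ar₂ : C₂ → ℕ}
    (I₁ : (c : C₁) → (Fin (ar₁ c) → A₁) → A₁)
    (I₂ : (c : C₂) → (Fin (ar₂ c) → A₂) → A₂)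
    (D₁ : Set A₁) (D₂ : Set A₂)
    (h₁ : ∃ (Γ : Set (Fm C₁ ar₁)) (ψ : Fm C₁ ar₁), ¬ Mdl I₁ D₁ Γ ψ)
    (lam : A₁ → A₂) (mu : A₂ → A₁) (φ : Fm C₁ ar₁) :
    Mdl I₁ D₁ ∅ φ ↔
      Mdl (fibInterp I₁ I₂ lam mu) (Dfib D₁ D₂) ∅ (inj₁ ar₂ φ) := by
  simp only [mdl_empty_iff]
  constructor
  · intro htaut v
    cases φ with
    | var n => exact absurd ((mdl_empty_iff I₁ D₁ _).2 htaut) (not_mdl_empty_var h₁ n)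
    | app c args =>
        rw [eval_inj₁_app, inl_mem_Dfib]
        exact htaut _
  · intro htaut w
    simpa [eval_inj₁_inl] using htaut (Sum.inl ∘ w)

/-- for non-trivial matrix logics, the fibring is a weak
conservative extension of `L₁`: a formula of `L(C₁)` is a tautology of `M₁`
iff it is a tautology of the fibred matrix, for every fibring pair. -/
theorem fibring_weak_conservative
    {C₁ C₂ A₁ A₂ : Type} {ar₁ : C₁ → ℕ} {ar₂ : C₂ → ℕ}
    (I₁ : (c : C₁) → (Fin (ar₁ c) → A₁) → A₁)
    (I₂ : (c : C₂) → (Fin (ar₂ c) → A₂) → A₂)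
    (D₁ : Set A₁) (D₂ : Set A₂)
    (h₁ : ∃ (Γ : Set (Fm C₁ ar₁)) (ψ : Fm C₁ ar₁), ¬ Mdl I₁ D₁ Γ ψ)
    (h₂ : ∃ (Γ : Set (Fm C₂ ar₂)) (ψ : Fm C₂ ar₂), ¬ Mdl I₂ D₂ Γ ψ)
    (lam : A₁ → A₂) (mu : A₂ → A₁) (φ : Fm C₁ ar₁) :
    Mdl I₁ D₁ ∅ φ ↔
      Mdl (fibInterp I₁ I₂ lam mu) (Dfib D₁ D₂) ∅ (inj₁ ar₂ φ) :=
  fibring_weak_conservative_general I₁ I₂ D₁ D₂ h₁ lam mu φ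

end Fibring
end

section
/- Suppose c₁ ∈ C₁ and c₂ ∈ C₂ are k-ary connectives and (λ,μ) is a fibring pair such that λ is an isomorphism from the {c₁}-reduct of A₁ to the {c₂}-reduct of A₂ (i.e., λ is bijective and λ(c₁^{A₁}(x₁,…,x_k)) = c₂^{A₂}(λ(x₁),…,λ(x_k)) for all xᵢ ∈ A₁) with μ = λ⁻¹. Then for every pair of non-atomic (c₁,c₂)-associated formulas ψ₁, ψ₂ in L(C₁⊎C₂) and every assignment of values in A₁⊎A₂ to their atoms, ∗_λ(ψ₁(ā)) = ∗_λ(ψ₂(ā)) and ∗_μ(ψ₁(ā)) = ∗_μ(ψ₂(ā)), where ψ(ā) denotes the value of ψ in the fibred matrix M_(λ,μ). -/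
set_option autoImplicit false

namespace Fibring

variable {C₁ C₂ A₁ A₂ : Type} {ar₁ : C₁ → ℕ} {ar₂ : C₂ → ℕ}

theorem starLa_eq_lam_starMu {A₁ A₂ : Type} (lam : A₁ → A₂) (mu : A₂ → A₁)
    (hinv₂ : Function.RightInverse mu lam) (a : A₁ ⊕ A₂) :
    starLa lam a = lam (starMu mu a) := by
  cases a with
  | inl x => rfl
  | inr y => exact (hinv₂ y).symm

theorem repl_eval_eq
    {C₁ C₂ A₁ A₂ : Type} {ar₁ : C₁ → ℕ} {ar₂ : C₂ → ℕ}
    (I₁ : (c : C₁) → (Fin (ar₁ c) → A₁) → A₁)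
    (I₂ : (c : C₂) → (Fin (ar₂ c) → A₂) → A₂)
    (c₁ : C₁) (c₂ : C₂) (h : ar₁ c₁ = ar₂ c₂)
    (lam : A₁ → A₂) (mu : A₂ → A₁)
    (hhom : ∀ args : Fin (ar₁ c₁) → A₁,
      lam (I₁ c₁ args) = I₂ c₂ fun i => lam (args (Fin.cast h.symm i)))
    (hinv₁ : Function.LeftInverse mu lam)
    (hinv₂ : Function.RightInverse mu lam)
    (ψ₁ ψ₂ : Fm (C₁ ⊕ C₂) (Sum.elim ar₁ ar₂))
    (hrepl : Repl (Sum.inl c₁) (Sum.inr c₂) h ψ₁ ψ₂)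
    (v : ℕ → A₁ ⊕ A₂) :
    starLa lam (eval (fibInterp I₁ I₂ lam mu) v ψ₁) =
        starLa lam (eval (fibInterp I₁ I₂ lam mu) v ψ₂) ∧
      starMu mu (eval (fibInterp I₁ I₂ lam mu) v ψ₁) =
        starMu mu (eval (fibInterp I₁ I₂ lam mu) v ψ₂) := by
  induction hrepl with
  | top args =>
      have key : (I₂ c₂ fun i =>
          starLa lam (eval (fibInterp I₁ I₂ lam mu) v (args (Fin.cast h.symm i)))) =
          lam (I₁ c₁ fun i => starMu mu (eval (fibInterp I₁ I₂ lam mu) v (args i))) := by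
        rw [hhom]
        exact congrArg _ (funext fun i =>
          starLa_eq_lam_starMu lam mu hinv₂ _)
      constructor
      · show lam _ = _
        simp only [eval, fibInterp]
        exact key.symm
      · show _ = mu _
        simp only [eval, fibInterp]
        exact ((congrArg mu key).trans (hinv₁ _)).symm
  | congr c args args' j hj hother ih =>
      cases c with
      | inl c =>
          have : (fun i => starMu mu (eval (fibInterp I₁ I₂ lam mu) v (args i))) =
              fun i => starMu mu (eval (fibInterp I₁ I₂ lam mu) v (args' i)) := by
            funext i
            by_cases hi : i = j
            · subst hi; exact ih.2
            · rw [hother i hi]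
          refine ⟨?_, ?_⟩
          · exact congrArg (fun f => starLa lam (Sum.inl (I₁ c f))) this
          · exact congrArg (fun f => starMu mu (Sum.inl (I₁ c f))) this
      | inr c =>
          have : (fun i => starLa lam (eval (fibInterp I₁ I₂ lam mu) v (args i))) =
              fun i => starLa lam (eval (fibInterp I₁ I₂ lam mu) v (args' i)) := by
            funext i
            by_cases hi : i = j
            · subst hi; exact ih.1
            · rw [hother i hi]
          refine ⟨?_, ?_⟩
          · exact congrArg (fun f => starLa lam (Sum.inr (I₂ c f))) this
          · exact congrArg (fun f => starMu mu (Sum.inr (I₂ c f))) this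

/-- if `λ` is an isomorphism between the `{c₁}`- and
`{c₂}`-reducts with `μ = λ⁻¹`, then any two non-atomic `(c₁,c₂)`-associated
formulas have the same value modulo the coercions `∗_λ` and `∗_μ`. -/
theorem assoc_formulas_equal_mod_star
    {C₁ C₂ A₁ A₂ : Type} {ar₁ : C₁ → ℕ} {ar₂ : C₂ → ℕ}
    (I₁ : (c : C₁) → (Fin (ar₁ c) → A₁) → A₁)
    (I₂ : (c : C₂) → (Fin (ar₂ c) → A₂) → A₂)
    (c₁ : C₁) (c₂ : C₂) (h : ar₁ c₁ = ar₂ c₂)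
    (lam : A₁ → A₂) (mu : A₂ → A₁)
    (hbij : Function.Bijective lam)
    (hhom : ∀ args : Fin (ar₁ c₁) → A₁,
      lam (I₁ c₁ args) = I₂ c₂ fun i => lam (args (Fin.cast h.symm i)))
    (hinv₁ : Function.LeftInverse mu lam)
    (hinv₂ : Function.RightInverse mu lam)
    (ψ₁ ψ₂ : Fm (C₁ ⊕ C₂) (Sum.elim ar₁ ar₂))
    (hassoc : Assoc (Sum.inl c₁) (Sum.inr c₂) h ψ₁ ψ₂)
    (hna₁ : ∀ n, ψ₁ ≠ .var n) (hna₂ : ∀ n, ψ₂ ≠ .var n)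
    (v : ℕ → A₁ ⊕ A₂) :
    starLa lam (eval (fibInterp I₁ I₂ lam mu) v ψ₁) =
        starLa lam (eval (fibInterp I₁ I₂ lam mu) v ψ₂) ∧
      starMu mu (eval (fibInterp I₁ I₂ lam mu) v ψ₁) =
        starMu mu (eval (fibInterp I₁ I₂ lam mu) v ψ₂) := by
  clear hna₁ hna₂ hbij
  induction hassoc with
  | rel x y hxy => exact repl_eval_eq I₁ I₂ c₁ c₂ h lam mu hhom hinv₁ hinv₂ x y hxy v
  | refl x => exact ⟨rfl, rfl⟩
  | symm x y _ ih => exact ⟨ih.1.symm, ih.2.symm⟩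
  | trans x y z _ _ ih₁ ih₂ => exact ⟨ih₁.1.trans ih₂.1, ih₁.2.trans ih₂.2⟩

end Fibring
end

section
/- Suppose c₁ ∈ C₁ and c₂ ∈ C₂ are k-ary connectives and (λ,μ) is an admissible fibring pair such that λ is a matrix isomorphism from the {c₁}-fragment of M₁ to the {c₂}-fragment of M₂ (λ bijective, commuting with the truth-functions c₁, c₂, and preserving/reflecting designatedness) with μ = λ⁻¹. Then (λ,μ) identifies c₁ with c₂: for all (c₁,c₂)-associated formulas φ₁, φ₂ in L(C₁⊎C₂) and every assignment ā of values in A₁⊎A₂, φ₁(ā) ∈ D₁⊎D₂ if and only if φ₂(ā) ∈ D₁⊎D₂. -/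
/-!
Coerce every value of the fibred matrix into `A₁` by `∗_μ`. Because `μ = λ⁻¹`, the coercion
`∗_λ` factors as `λ ∘ ∗_μ`, so the `∗_μ`-image of the value of `c(ψ̄)` depends only on the
`∗_μ`-images of the values of the `ψᵢ`; and since `λ` commutes with `c₁, c₂`, the
`∗_μ`-images of `c₁(ψ̄)` and `c₂(ψ̄)` coincide. Hence a single replacement, and then any chain
of them, leaves the `∗_μ`-image unchanged. Admissibility of `μ` makes designatedness in
`D₁ ⊎ D₂` a property of the `∗_μ`-image alone.
-/

set_option autoImplicit false

namespace Fibring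

variable {C₁ C₂ A₁ A₂ : Type} {ar₁ : C₁ → ℕ} {ar₂ : C₂ → ℕ}

section

theorem starLa_eq_comp_starMu {lam : A₁ → A₂} {mu : A₂ → A₁}
    (hinv : Function.RightInverse mu lam) (x : A₁ ⊕ A₂) :
    starLa lam x = lam (starMu mu x) := by
  cases x with
  | inl a => rfl
  | inr b => exact (hinv b).symm

theorem mem_Dfib_iff_starMu_mem {D₁ : Set A₁} {D₂ : Set A₂} {mu : A₂ → A₁}
    (hmu : ∀ y, mu y ∈ D₁ ↔ y ∈ D₂) (x : A₁ ⊕ A₂) :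
    x ∈ Dfib D₁ D₂ ↔ starMu mu x ∈ D₁ := by
  cases x with
  | inl a => simp [Dfib, starMu]
  | inr b => simp [Dfib, starMu, hmu b]

variable (I₁ : (c : C₁) → (Fin (ar₁ c) → A₁) → A₁)
  (I₂ : (c : C₂) → (Fin (ar₂ c) → A₂) → A₂) {lam : A₁ → A₂} {mu : A₂ → A₁}
  (v : ℕ → A₁ ⊕ A₂)

theorem starMu_eval_app_congr (hinv : Function.RightInverse mu lam) (c : C₁ ⊕ C₂)
    {args args' : Fin (Sum.elim ar₁ ar₂ c) → Fm (C₁ ⊕ C₂) (Sum.elim ar₁ ar₂)}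
    (hargs : ∀ i, starMu mu (eval (fibInterp I₁ I₂ lam mu) v (args i)) =
      starMu mu (eval (fibInterp I₁ I₂ lam mu) v (args' i))) :
    starMu mu (eval (fibInterp I₁ I₂ lam mu) v (.app c args)) =
      starMu mu (eval (fibInterp I₁ I₂ lam mu) v (.app c args')) := by
  cases c with
  | inl c => exact congrArg (fun a => starMu mu (.inl (I₁ c a))) (funext hargs)
  | inr c =>
    simp only [eval, fibInterp, starLa_eq_comp_starMu hinv]
    exact congrArg (fun a => starMu mu (.inr (I₂ c (lam ∘ a)))) (funext hargs)

theorem starMu_eval_eq_of_repl {c₁ : C₁} {c₂ : C₂} {h : ar₁ c₁ = ar₂ c₂}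
    (hhom : ∀ args : Fin (ar₁ c₁) → A₁,
      lam (I₁ c₁ args) = I₂ c₂ fun i => lam (args (Fin.cast h.symm i)))
    (hinv₁ : Function.LeftInverse mu lam) (hinv₂ : Function.RightInverse mu lam)
    {φ ψ : Fm (C₁ ⊕ C₂) (Sum.elim ar₁ ar₂)} (hrepl : Repl (Sum.inl c₁) (Sum.inr c₂) h φ ψ) :
    starMu mu (eval (fibInterp I₁ I₂ lam mu) v φ) =
      starMu mu (eval (fibInterp I₁ I₂ lam mu) v ψ) := by
  induction hrepl with
  | top args =>
    simp only [eval, fibInterp, starLa_eq_comp_starMu hinv₂]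
    exact (hinv₁ _).symm.trans (congrArg mu (hhom _))
  | congr c args args' j _ hother ih =>
    refine starMu_eval_app_congr I₁ I₂ v hinv₂ c fun i => ?_
    by_cases hij : i = j
    · subst hij; exact ih
    · rw [hother i hij]

theorem starMu_eval_eq_of_assoc {c₁ : C₁} {c₂ : C₂} {h : ar₁ c₁ = ar₂ c₂}
    (hhom : ∀ args : Fin (ar₁ c₁) → A₁,
      lam (I₁ c₁ args) = I₂ c₂ fun i => lam (args (Fin.cast h.symm i)))
    (hinv₁ : Function.LeftInverse mu lam) (hinv₂ : Function.RightInverse mu lam)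
    {φ ψ : Fm (C₁ ⊕ C₂) (Sum.elim ar₁ ar₂)} (hassoc : Assoc (Sum.inl c₁) (Sum.inr c₂) h φ ψ) :
    starMu mu (eval (fibInterp I₁ I₂ lam mu) v φ) =
      starMu mu (eval (fibInterp I₁ I₂ lam mu) v ψ) :=
  (Setoid.ker fun φ => starMu mu (eval (fibInterp I₁ I₂ lam mu) v φ)).iseqv.eqvGen_iff.1 <|
    hassoc.mono fun _ _ => starMu_eval_eq_of_repl I₁ I₂ v hhom hinv₁ hinv₂

end

theorem fibring_identifies_connectives_general
    {C₁ C₂ A₁ A₂ : Type} {ar₁ : C₁ → ℕ} {ar₂ : C₂ → ℕ}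
    (I₁ : (c : C₁) → (Fin (ar₁ c) → A₁) → A₁)
    (I₂ : (c : C₂) → (Fin (ar₂ c) → A₂) → A₂)
    (D₁ : Set A₁) (D₂ : Set A₂)
    (c₁ : C₁) (c₂ : C₂) (h : ar₁ c₁ = ar₂ c₂)
    (lam : A₁ → A₂) (mu : A₂ → A₁)
    (hadm : Admissible D₁ D₂ lam mu)
    (hhom : ∀ args : Fin (ar₁ c₁) → A₁,
      lam (I₁ c₁ args) = I₂ c₂ fun i => lam (args (Fin.cast h.symm i)))
    (hinv₁ : Function.LeftInverse mu lam)
    (hinv₂ : Function.RightInverse mu lam)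
    (φ₁ φ₂ : Fm (C₁ ⊕ C₂) (Sum.elim ar₁ ar₂))
    (hassoc : Assoc (Sum.inl c₁) (Sum.inr c₂) h φ₁ φ₂)
    (v : ℕ → A₁ ⊕ A₂) :
    eval (fibInterp I₁ I₂ lam mu) v φ₁ ∈ Dfib D₁ D₂ ↔
      eval (fibInterp I₁ I₂ lam mu) v φ₂ ∈ Dfib D₁ D₂ := by
  rw [mem_Dfib_iff_starMu_mem hadm.2, mem_Dfib_iff_starMu_mem hadm.2,
    starMu_eval_eq_of_assoc I₁ I₂ v hhom hinv₁ hinv₂ hassoc]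

/-- if `(λ,μ)` is admissible and `λ` is a matrix isomorphism
between the `{c₁}`- and `{c₂}`-fragments with `μ = λ⁻¹`, then `(λ,μ)`
identifies `c₁` with `c₂` in the fibred matrix. -/
theorem fibring_identifies_connectives
    {C₁ C₂ A₁ A₂ : Type} {ar₁ : C₁ → ℕ} {ar₂ : C₂ → ℕ}
    (I₁ : (c : C₁) → (Fin (ar₁ c) → A₁) → A₁)
    (I₂ : (c : C₂) → (Fin (ar₂ c) → A₂) → A₂)
    (D₁ : Set A₁) (D₂ : Set A₂)
    (c₁ : C₁) (c₂ : C₂) (h : ar₁ c₁ = ar₂ c₂)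
    (lam : A₁ → A₂) (mu : A₂ → A₁)
    (hadm : Admissible D₁ D₂ lam mu)
    (hbij : Function.Bijective lam)
    (hhom : ∀ args : Fin (ar₁ c₁) → A₁,
      lam (I₁ c₁ args) = I₂ c₂ fun i => lam (args (Fin.cast h.symm i)))
    (hinv₁ : Function.LeftInverse mu lam)
    (hinv₂ : Function.RightInverse mu lam)
    (φ₁ φ₂ : Fm (C₁ ⊕ C₂) (Sum.elim ar₁ ar₂))
    (hassoc : Assoc (Sum.inl c₁) (Sum.inr c₂) h φ₁ φ₂)
    (v : ℕ → A₁ ⊕ A₂) :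
    eval (fibInterp I₁ I₂ lam mu) v φ₁ ∈ Dfib D₁ D₂ ↔
      eval (fibInterp I₁ I₂ lam mu) v φ₂ ∈ Dfib D₁ D₂ :=
  fibring_identifies_connectives_general I₁ I₂ D₁ D₂ c₁ c₂ h lam mu hadm hhom hinv₁ hinv₂ φ₁ φ₂
    hassoc v

end Fibring
end
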